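/- Let a random walk on a finite connected graph G with m edges be generated by an edge-weight function w normalized so that w of some edge incident to a pendant vertex a equals 1, and let τ be the asymmetry. If a is a pendant vertex with unique neighbor a_1, then the hitting time H(a_1, a) ≤ P(τ, m) = 2(τ^{m−1} + τ^{m−2} + ... + τ) + 1; equivalently, the total edge-conductance Σ_{e∈E} w(e) is at most τ^{m−1} + ... + τ + 1. -/

import Mathlib

/-- `IsWeightedHittingTime G w a H` : `H` satisfies the linear system characterizing the
expected hitting times of the absorbing vertex `a` for the random walk on `G` generated
by the edge-weight function `w` (transition probabilities `p_{xy} = w x y / ∑_z w x z`). -/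
def IsWeightedHittingTime {V : Type*} [Fintype V] (G : SimpleGraph V)
    (w : V → V → ℝ) (a : V) (H : V → ℝ) : Prop :=
  H a = 0 ∧ ∀ x, x ≠ a →
    (∑ y, w x y) * H x = (∑ y, w x y) + ∑ y, w x y * H y

/-- `P t m = 2·∑_{k=1}^{m−1} t^k + 1 = 2(t^{m−1} + ⋯ + t) + 1`. -/
noncomputable def P (t : ℝ) (m : ℕ) : ℝ := 2 * ∑ k ∈ Finset.Ico 1 m, t ^ k + 1

/-!
Grow a set of edges from the pendant edge `{a, a₁}` one edge at a time. Since `G` is connected,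
each new edge can be chosen to share a vertex with an edge already chosen, so by the asymmetry
bound the `k`-th edge added has weight at most `τ ^ k`; hence `∑ₑ w e ≤ 1 + τ + ⋯ + τ ^ (m - 1)`.
Summing the hitting-time equations and using the symmetry of `w` gives Kac's formula
`∑ₓ ∑ᵧ w x y = ∑ᵧ w a y (1 + H y)`, which for a pendant vertex with `w a a₁ = 1` reads
`1 + H a₁ = 2 ∑ₑ w e`.
-/

open Finset SimpleGraph

namespace SimpleGraph

variable {V : Type*} [Fintype V] [DecidableEq V] {G : SimpleGraph V} [DecidableRel G.Adj]

theorem sum_sum_eq_two_mul_sum_edgeFinset {w : V → V → ℝ}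
    (hw_zero : ∀ x y, ¬ G.Adj x y → w x y = 0) {f : Sym2 V → ℝ} (hf : ∀ x y, f s(x, y) = w x y) :
    ∑ x, ∑ y, w x y = 2 * ∑ e ∈ G.edgeFinset, f e := by
  have hdarts : ∑ x, ∑ y, w x y = ∑ d : G.Dart, f d.edge := by
    rw [← sum_product', ← sum_filter_of_ne fun p _ hp => by_contra fun h => hp (hw_zero _ _ h)]
    refine sum_bij' (fun p hp => ⟨p, (mem_filter.1 hp).2⟩) (fun d _ => d.toProd) ?_ ?_ ?_ ?_ ?_
      <;> simp [Dart.edge, hf]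
  rw [hdarts, ← sum_fiberwise_of_maps_to (g := Dart.edge) fun d _ => mem_edgeFinset.2 d.edge_mem,
    mul_sum]
  refine sum_congr rfl fun e he => ?_
  rw [sum_congr rfl fun d hd => congrArg f (mem_filter.1 hd).2, sum_const,
    G.dart_edge_fiber_card e (mem_edgeFinset.1 he), two_smul, two_mul]

theorem exists_adj_notMem_of_ssubset_edgeFinset (hconn : G.Connected) {s : Finset (Sym2 V)}
    (hsE : s ⊂ G.edgeFinset) (hs : s.Nonempty) :
    ∃ x y z, G.Adj x y ∧ s(x, y) ∉ s ∧ s(x, z) ∈ s := by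
  obtain ⟨e, he⟩ := hs
  obtain ⟨e', he'E, he's⟩ := exists_of_ssubset hsE
  induction e using Sym2.ind with | _ u₀ v₀ => ?_
  induction e' using Sym2.ind with | _ u v => ?_
  let T : Set V := {x | ∃ z, s(x, z) ∈ s}
  by_cases hu : u ∈ T
  · obtain ⟨z, hz⟩ := hu
    exact ⟨u, v, z, mem_edgeFinset.1 he'E, he's, hz⟩
  · obtain ⟨d, -, ⟨z, hz⟩, hd⟩ :=
      (hconn.preconnected u₀ u).some.exists_boundary_dart T ⟨v₀, he⟩ hu
    exact ⟨d.fst, d.snd, z, d.adj, fun h => hd ⟨d.fst, by rwa [Sym2.eq_swap]⟩, hz⟩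

variable {f : Sym2 V → ℝ} {τ : ℝ}

theorem exists_subset_edgeFinset_sum_le_geom_sum (hconn : G.Connected) (hτ : 1 ≤ τ)
    (hf : ∀ x y z, G.Adj x y → G.Adj x z → f s(x, y) ≤ τ * f s(x, z))
    {e₀ : Sym2 V} (he₀ : e₀ ∈ G.edgeFinset) (hfe₀ : f e₀ ≤ 1) :
    ∀ n < #G.edgeFinset, ∃ s ⊆ G.edgeFinset, #s = n + 1 ∧ (∀ e ∈ s, f e ≤ τ ^ n) ∧
      ∑ e ∈ s, f e ≤ ∑ k ∈ range (n + 1), τ ^ k := by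
  intro n hn
  induction n with
  | zero => exact ⟨{e₀}, singleton_subset_iff.2 he₀, card_singleton _, by simpa, by simpa⟩
  | succ n ih =>
    obtain ⟨s, hsE, hcard, hbound, hsum⟩ := ih (by omega)
    obtain ⟨x, y, z, hxy, hxys, hxz⟩ := exists_adj_notMem_of_ssubset_edgeFinset hconn
      (hsE.ssubset_of_ne (by rintro rfl; omega)) (card_pos.1 (by omega))
    have hnew : f s(x, y) ≤ τ ^ (n + 1) := calc
      f s(x, y) ≤ τ * f s(x, z) := hf x y z hxy (mem_edgeFinset.1 (hsE hxz))
      _ ≤ τ * τ ^ n := mul_le_mul_of_nonneg_left (hbound _ hxz) (by linarith)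
      _ = τ ^ (n + 1) := (pow_succ' τ n).symm
    refine ⟨insert s(x, y) s, insert_subset (mem_edgeFinset.2 hxy) hsE,
      by rw [card_insert_of_notMem hxys, hcard], ?_, ?_⟩
    · rw [forall_mem_insert]
      exact ⟨hnew, fun e he => (hbound e he).trans (pow_le_pow_right₀ hτ n.le_succ)⟩
    · rw [sum_insert hxys, sum_range_succ _ (n + 1)]
      linarith

theorem sum_edgeFinset_le_geom_sum (hconn : G.Connected) (hτ : 1 ≤ τ)
    (hf : ∀ x y z, G.Adj x y → G.Adj x z → f s(x, y) ≤ τ * f s(x, z))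
    {e₀ : Sym2 V} (he₀ : e₀ ∈ G.edgeFinset) (hfe₀ : f e₀ ≤ 1) :
    ∑ e ∈ G.edgeFinset, f e ≤ ∑ k ∈ range #G.edgeFinset, τ ^ k := by
  have hpos : 0 < #G.edgeFinset := card_pos.2 ⟨e₀, he₀⟩
  obtain ⟨s, hsE, hcard, -, hsum⟩ := exists_subset_edgeFinset_sum_le_geom_sum hconn hτ hf he₀ hfe₀
    (#G.edgeFinset - 1) (by omega)
  obtain rfl := eq_of_subset_of_card_le hsE (by omega)
  rwa [Nat.sub_add_cancel hpos] at hsum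

end SimpleGraph

theorem IsWeightedHittingTime.sum_sum_eq {V : Type*} [Fintype V] {G : SimpleGraph V}
    {w : V → V → ℝ} {a : V} {H : V → ℝ} (hH : IsWeightedHittingTime G w a H)
    (hw_symm : ∀ x y, w x y = w y x) :
    ∑ x, ∑ y, w x y = ∑ y, w a y * (1 + H y) := by
  classical
  obtain ⟨hHa, hHx⟩ := hH
  have hbalance : ∑ x, ((∑ y, w x y) * H x - ∑ y, w x y * H y) = 0 := by
    rw [sum_sub_distrib, sub_eq_zero, sum_comm]
    simp only [sum_mul, hw_symm]
  have hterm : ∀ x, (∑ y, w x y) * H x - ∑ y, w x y * H y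
      = ∑ y, w x y - if x = a then ∑ y, w a y * (1 + H y) else 0 := by
    intro x
    by_cases hx : x = a
    · subst hx
      simp [hHa, mul_add, sum_add_distrib]
    · simp only [hx, if_false, hHx x hx]
      ring
  simp only [hterm, sum_sub_distrib, sum_ite_eq', mem_univ, if_true] at hbalance
  linarith

theorem pendant_hitting_le_general {V : Type*} [Fintype V] [DecidableEq V]
    (G : SimpleGraph V) [DecidableRel G.Adj] (hconn : G.Connected)
    (m : ℕ) (hm : m = G.edgeFinset.card)
    (w : V → V → ℝ)
    (hw_symm : ∀ x y, w x y = w y x)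
    (hw_zero : ∀ x y, ¬ G.Adj x y → w x y = 0)
    (τ : ℝ) (hτ : ∀ x y z, G.Adj x y → G.Adj x z → w x y ≤ τ * w x z)
    (a a₁ : V) (hadj : G.Adj a a₁) (hpend : ∀ z, G.Adj a z → z = a₁)
    (hnorm : w a a₁ = 1)
    (wE : Sym2 V → ℝ) (hwE : ∀ u v : V, wE s(u, v) = w u v)
    (H : V → ℝ) (hH : IsWeightedHittingTime G w a H) :
    H a₁ ≤ P τ m ∧ ∑ e ∈ G.edgeFinset, wE e ≤ ∑ k ∈ Finset.range m, τ ^ k := by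
  have hτ1 : 1 ≤ τ := by simpa [hnorm] using hτ a a₁ a₁ hadj hadj
  have hedges : ∑ e ∈ G.edgeFinset, wE e ≤ ∑ k ∈ range m, τ ^ k :=
    hm ▸ sum_edgeFinset_le_geom_sum hconn hτ1 (by simpa only [hwE] using hτ)
      (mem_edgeFinset.2 hadj) (by rw [hwE, hnorm])
  have hreturn : 1 + H a₁ = 2 * ∑ e ∈ G.edgeFinset, wE e := by
    rw [← sum_sum_eq_two_mul_sum_edgeFinset hw_zero hwE, hH.sum_sum_eq hw_symm,
      sum_eq_single a₁ (fun y _ hy => by rw [hw_zero a y (mt (hpend y) hy), zero_mul])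
        (absurd (mem_univ a₁)), hnorm, one_mul]
  have hm0 : 0 < m := hm ▸ card_pos.2 ⟨s(a, a₁), mem_edgeFinset.2 hadj⟩
  refine ⟨?_, hedges⟩
  rw [sum_range_eq_add_Ico _ hm0, pow_zero] at hedges
  unfold P
  linarith

/-- Let a random walk on a finite connected graph `G` with `m` edges be generated by an
edge-weight function `w` of asymmetry at most `τ`, normalized so that the weight of the
edge at the pendant vertex `a` equals `1`. If `a` is pendant with unique neighbor `a₁`,
then `H(a₁, a) ≤ P(τ, m) = 2(τ^{m−1} + ⋯ + τ) + 1`; equivalently, the total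
edge-conductance satisfies `∑_{e ∈ E} w(e) ≤ τ^{m−1} + ⋯ + τ + 1`. -/
theorem pendant_hitting_le {V : Type*} [Fintype V] [DecidableEq V]
    (G : SimpleGraph V) [DecidableRel G.Adj] (hconn : G.Connected)
    (m : ℕ) (hm : m = G.edgeFinset.card)
    (w : V → V → ℝ)
    (hw_symm : ∀ x y, w x y = w y x)
    (hw_pos : ∀ x y, G.Adj x y → 0 < w x y)
    (hw_zero : ∀ x y, ¬ G.Adj x y → w x y = 0)
    (τ : ℝ) (hτ : ∀ x y z, G.Adj x y → G.Adj x z → w x y ≤ τ * w x z)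
    (a a₁ : V) (hadj : G.Adj a a₁) (hpend : ∀ z, G.Adj a z → z = a₁)
    (hnorm : w a a₁ = 1)
    (wE : Sym2 V → ℝ) (hwE : ∀ u v : V, wE s(u, v) = w u v)
    (H : V → ℝ) (hH : IsWeightedHittingTime G w a H) :
    H a₁ ≤ P τ m ∧ ∑ e ∈ G.edgeFinset, wE e ≤ ∑ k ∈ Finset.range m, τ ^ k :=
  pendant_hitting_le_general G hconn m hm w hw_symm hw_zero τ hτ a a₁ hadj hpend hnorm wE hwE H hH
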